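/- Let N ≥ 1, let ρ₁, …, ρ_N be n×n density matrices (positive semidefinite with trace 1), and let π₁, …, π_N be nonnegative reals summing to 1. Then for EVERY POVM {Π₁, …, Π_N} on ℂⁿ, the error probability satisfies Σ_{i ≠ j} π_i · Tr(Π_j ρ_i) ≥ (1/2) · Σ_{i ≠ j} π_i π_j · F(ρ_i, ρ_j)². -/

import Mathlib

open Matrix
open scoped ComplexOrder

/-- The positive semidefinite square root of a matrix (junk value 0 if not PSD). -/
noncomputable def matSqrt {ι : Type*} [Fintype ι] [DecidableEq ι]
    (A : Matrix ι ι ℂ) : Matrix ι ι ℂ :=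
  open scoped Classical in
  if h : A.PosSemidef then (h.1.eigenvectorUnitary : Matrix ι ι ℂ) *
    diagonal ((↑) ∘ Real.sqrt ∘ h.1.eigenvalues) * (star h.1.eigenvectorUnitary : Matrix ι ι ℂ)
  else 0

/-- The fidelity F(ρ, σ) = Tr √(√ρ · σ · √ρ) between matrices. -/
noncomputable def mFid {ι : Type*} [Fintype ι] [DecidableEq ι]
    (ρ σ : Matrix ι ι ℂ) : ℝ :=
  ((matSqrt (matSqrt ρ * σ * matSqrt ρ)).trace).re

/-!
Measuring two states with a POVM `{P_k}` cannot decrease their fidelity. By the polar decomposition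
`√σ √ρ = C |√σ √ρ|` with a contraction `C`, `F(ρ, σ) = Re Tr (C† √σ √ρ) = Σ_k Re Tr (C† √σ P_k √ρ)`,
and Cauchy–Schwarz for the trace form bounds the `k`-th term by `√Tr (P_k ρ) · √Tr (P_k σ)`.

This reduces the claim to the outcome distributions `q_i k = Tr (P_k ρ_i)`. With `a_ik = π_i q_i k`,
Cauchy–Schwarz with weights `min` and `max` gives
`π_i π_j (Σ_k √(q_i k q_j k))² ≤ (π_i + π_j) Σ_k min (a_ik, a_jk)`. Each summand is charged to
error terms: to `π_j a_ik + π_i a_jk` when `k ∉ {i, j}`, and to `(π_i + π_j) a_ij` when `k = j`.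
Summing over ordered pairs `i ≠ j`, each of the two halves of this charge weights every error term
`a_ik` (`k ≠ i`) by `Σ_{j ≠ i} π_j + π_i = 1`, so the total is twice the error probability.
-/

section Quantum

lemma re_trace_conjTranspose_mul_le {m n : Type*} [Fintype m] [Fintype n] (B C : Matrix m n ℂ) :
    (Bᴴ * C).trace.re ≤ √(Bᴴ * B).trace.re * √(Cᴴ * C).trace.re := by
  have hinner (X Y : Matrix m n ℂ) :
      (Xᴴ * Y).trace = inner ℂ (WithLp.toLp 2 X.vec) (WithLp.toLp 2 Y.vec) := by
    rw [EuclideanSpace.inner_toLp_toLp, dotProduct_comm, star_vec_dotProduct_vec]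
  have hnorm (X : Matrix m n ℂ) : √(Xᴴ * X).trace.re = ‖WithLp.toLp 2 X.vec‖ := by
    rw [hinner, ← RCLike.re_to_complex, ← norm_sq_eq_re_inner, Real.sqrt_sq (norm_nonneg _)]
  rw [hnorm, hnorm, hinner, ← RCLike.re_to_complex]
  exact re_inner_le_norm _ _

lemma posSemidef_one_sub_of_isHermitian_of_mul_self {m R : Type*} [Fintype m] [DecidableEq m]
    [Ring R] [PartialOrder R] [StarRing R] [StarOrderedRing R] {P : Matrix m m R}
    (hP : P.IsHermitian) (hPP : P * P = P) : (1 - P).PosSemidef := by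
  have h : (1 - P)ᴴ * (1 - P) = 1 - P := by
    rw [conjTranspose_sub, conjTranspose_one, hP.eq, Matrix.sub_mul, Matrix.one_mul,
      Matrix.mul_sub, Matrix.mul_one, hPP, sub_self, sub_zero]
  exact h ▸ posSemidef_conjTranspose_mul_self _

variable {m : Type*} [Fintype m] [DecidableEq m]

lemma matSqrt_of_posSemidef {A : Matrix m m ℂ} (hA : A.PosSemidef) :
    matSqrt A = Unitary.conjStarAlgAut ℂ _ hA.1.eigenvectorUnitary
      (diagonal ((↑) ∘ Real.sqrt ∘ hA.1.eigenvalues)) := by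
  rw [matSqrt, dif_pos hA, Unitary.conjStarAlgAut_apply]

lemma posSemidef_matSqrt (A : Matrix m m ℂ) : (matSqrt A).PosSemidef := by
  unfold matSqrt
  split_ifs with hA
  · have hD : (diagonal ((↑) ∘ Real.sqrt ∘ hA.1.eigenvalues : m → ℂ)).PosSemidef :=
      PosSemidef.diagonal fun k => by simp [Real.sqrt_nonneg]
    simpa [star_eq_conjTranspose] using hD.mul_mul_conjTranspose_same
      (hA.1.eigenvectorUnitary : Matrix m m ℂ)
  · exact PosSemidef.zero

lemma matSqrt_mul_self {A : Matrix m m ℂ} (hA : A.PosSemidef) : matSqrt A * matSqrt A = A := by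
  conv_rhs => rw [hA.1.spectral_theorem]
  rw [matSqrt_of_posSemidef hA, ← map_mul, diagonal_mul_diagonal]
  congr 2
  funext k
  simp [← Complex.ofReal_mul, Real.mul_self_sqrt (hA.eigenvalues_nonneg k)]

lemma mFid_nonneg (ρ σ : Matrix m m ℂ) : 0 ≤ mFid ρ σ :=
  (Complex.nonneg_iff.mp (posSemidef_matSqrt _).trace_nonneg).1

lemma re_trace_mul_nonneg {A B : Matrix m m ℂ} (hA : A.PosSemidef) (hB : B.PosSemidef) :
    0 ≤ (A * B).trace.re := by
  have hS : (matSqrt A)ᴴ = matSqrt A := (posSemidef_matSqrt A).1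
  have hconj : (A * B).trace = (matSqrt A * B * matSqrt A).trace := by
    conv_lhs => rw [← matSqrt_mul_self hA]
    rw [Matrix.mul_assoc, trace_mul_comm, Matrix.mul_assoc]
  have hpos := hB.conjTranspose_mul_mul_same (matSqrt A)
  rw [hS] at hpos
  rw [hconj]
  exact (Complex.nonneg_iff.mp hpos.trace_nonneg).1

lemma exists_contraction_conjTranspose_mul_eq_matSqrt (A : Matrix m m ℂ) :
    ∃ C : Matrix m m ℂ, (1 - C * Cᴴ).PosSemidef ∧ Cᴴ * A = matSqrt (Aᴴ * A) := by
  have hM := posSemidef_conjTranspose_mul_self A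
  set φ := Unitary.conjStarAlgAut ℂ (Matrix m m ℂ) hM.1.eigenvectorUnitary
  set ev := hM.1.eigenvalues
  -- `(√0)⁻¹ = 0`: `K` inverts `√(Aᴴ A)` on its support and vanishes on its kernel.
  set K := φ (diagonal fun k => (((√(ev k))⁻¹ : ℝ) : ℂ))
  have hK : Kᴴ = K := by
    rw [← star_eq_conjTranspose, ← map_star, star_eq_conjTranspose, diagonal_conjTranspose]
    congr 2
    funext k
    simp
  have hAA : Aᴴ * A = φ (diagonal fun k => (ev k : ℂ)) := hM.1.spectral_theorem
  have hsqrt : matSqrt (Aᴴ * A) = φ (diagonal fun k => (√(ev k) : ℂ)) :=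
    matSqrt_of_posSemidef hM
  refine ⟨A * K, posSemidef_one_sub_of_isHermitian_of_mul_self ?_ ?_, ?_⟩
  · exact isHermitian_mul_conjTranspose_self _
  · have hKKMKK : K * K * (Aᴴ * A) * K * K = K * K := by
      simp only [K, hAA, ← map_mul, diagonal_mul_diagonal]
      congr 2
      funext k
      by_cases h : ev k = 0
      · simp [h]
      · have : √(ev k) ≠ 0 := Real.sqrt_ne_zero'.mpr ((hM.eigenvalues_nonneg k).lt_of_ne' h)
        push_cast
        field_simp
        rw [← Complex.ofReal_pow, Real.sq_sqrt (hM.eigenvalues_nonneg k)]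
    calc A * K * (A * K)ᴴ * (A * K * (A * K)ᴴ)
        = A * (K * K * (Aᴴ * A) * K * K) * Aᴴ := by
          simp only [conjTranspose_mul, hK, Matrix.mul_assoc]
      _ = A * K * (A * K)ᴴ := by
          rw [hKKMKK, conjTranspose_mul, hK]
          simp only [Matrix.mul_assoc]
  · rw [hsqrt, conjTranspose_mul, hK, Matrix.mul_assoc, hAA, ← map_mul,
      diagonal_mul_diagonal]
    congr 2
    funext k
    rw [← Complex.ofReal_mul, inv_mul_eq_div, Real.div_sqrt]

lemma re_trace_mul_mul_conjTranspose_le {C Y : Matrix m m ℂ} (hC : (1 - C * Cᴴ).PosSemidef)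
    (hY : Y.PosSemidef) : (Y * (C * Cᴴ)).trace.re ≤ Y.trace.re := by
  have h := re_trace_mul_nonneg hY hC
  rw [Matrix.mul_sub, Matrix.mul_one, trace_sub, Complex.sub_re] at h
  linarith

lemma re_trace_conjTranspose_mul_le_of_contraction {C P S R : Matrix m m ℂ}
    (hC : (1 - C * Cᴴ).PosSemidef) (hP : P.PosSemidef) :
    (Cᴴ * (S * P * R)).trace.re ≤ √(P * (Sᴴ * S)).trace.re * √(P * (R * Rᴴ)).trace.re := by
  set Q := matSqrt P
  have hQ : Qᴴ = Q := (posSemidef_matSqrt P).1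
  have hQQ : Q * Q = P := matSqrt_mul_self hP
  have hSPS : (S * P * Sᴴ).PosSemidef := hP.mul_mul_conjTranspose_same S
  have hleft : ((Q * Sᴴ * C)ᴴ * (Q * Sᴴ * C)).trace = (S * P * Sᴴ * (C * Cᴴ)).trace := by
    calc ((Q * Sᴴ * C)ᴴ * (Q * Sᴴ * C)).trace = (Cᴴ * (S * (Q * Q) * Sᴴ * C)).trace := by
          simp only [conjTranspose_mul, conjTranspose_conjTranspose, hQ, Matrix.mul_assoc]
      _ = (S * P * Sᴴ * (C * Cᴴ)).trace := by
          rw [trace_mul_comm, hQQ]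
          simp only [Matrix.mul_assoc]
  have hright : ((Q * R)ᴴ * (Q * R)).trace = (P * (R * Rᴴ)).trace := by
    calc ((Q * R)ᴴ * (Q * R)).trace = (Rᴴ * (Q * Q * R)).trace := by
          simp only [conjTranspose_mul, hQ, Matrix.mul_assoc]
      _ = (P * (R * Rᴴ)).trace := by rw [trace_mul_comm, hQQ, Matrix.mul_assoc]
  have htrace : (S * P * Sᴴ).trace = (P * (Sᴴ * S)).trace := by
    rw [trace_mul_comm, ← Matrix.mul_assoc, trace_mul_comm]
  calc (Cᴴ * (S * P * R)).trace.re = ((Q * Sᴴ * C)ᴴ * (Q * R)).trace.re := by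
        rw [← hQQ]
        simp only [conjTranspose_mul, conjTranspose_conjTranspose, hQ, Matrix.mul_assoc]
    _ ≤ √((Q * Sᴴ * C)ᴴ * (Q * Sᴴ * C)).trace.re * √((Q * R)ᴴ * (Q * R)).trace.re :=
        re_trace_conjTranspose_mul_le _ _
    _ ≤ √(P * (Sᴴ * S)).trace.re * √(P * (R * Rᴴ)).trace.re := by
        rw [hleft, hright, ← htrace]
        exact mul_le_mul_of_nonneg_right
          (Real.sqrt_le_sqrt (re_trace_mul_mul_conjTranspose_le hC hSPS)) (Real.sqrt_nonneg _)

theorem mFid_le_sum_sqrt_mul_sqrt {ι : Type*} [Fintype ι] {ρ σ : Matrix m m ℂ}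
    (hρ : ρ.PosSemidef) (hσ : σ.PosSemidef) (P : ι → Matrix m m ℂ) (hP : ∀ k, (P k).PosSemidef)
    (hPsum : ∑ k, P k = 1) :
    mFid ρ σ ≤ ∑ k, √(P k * ρ).trace.re * √(P k * σ).trace.re := by
  set R := matSqrt ρ
  set S := matSqrt σ
  have hR : Rᴴ = R := (posSemidef_matSqrt ρ).1
  have hS : Sᴴ = S := (posSemidef_matSqrt σ).1
  have hSS : S * S = σ := matSqrt_mul_self hσ
  obtain ⟨C, hC, hCA⟩ := exists_contraction_conjTranspose_mul_eq_matSqrt (S * R)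
  have hSR : (S * R)ᴴ * (S * R) = R * σ * R := by
    rw [conjTranspose_mul, hR, hS, ← hSS]
    simp only [Matrix.mul_assoc]
  calc mFid ρ σ = (Cᴴ * (S * R)).trace.re := by rw [hCA, hSR]; rfl
    _ = ∑ k, (Cᴴ * (S * P k * R)).trace.re := by
        rw [← Complex.re_sum, ← trace_sum, ← Finset.mul_sum, ← Finset.sum_mul, ← Finset.mul_sum,
          hPsum, Matrix.mul_one]
    _ ≤ ∑ k, √(P k * ρ).trace.re * √(P k * σ).trace.re := by
        refine Finset.sum_le_sum fun k _ => ?_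
        have h := re_trace_conjTranspose_mul_le_of_contraction (S := S) (R := R) hC (hP k)
        rwa [hS, hSS, hR, matSqrt_mul_self hρ, mul_comm] at h

end Quantum

section OffDiagonal

variable {ι M : Type*} [Fintype ι] [DecidableEq ι]

def offDiagSum [AddCommMonoid M] (f : ι → ι → M) : M :=
  ∑ i, ∑ j, if i = j then 0 else f i j

lemma offDiagSum_add [AddCommMonoid M] (f g : ι → ι → M) :
    offDiagSum (fun i j => f i j + g i j) = offDiagSum f + offDiagSum g := by
  simp only [offDiagSum, ← Finset.sum_add_distrib]
  refine Finset.sum_congr rfl fun i _ => Finset.sum_congr rfl fun j _ => ?_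
  split_ifs <;> simp

lemma offDiagSum_swap [AddCommMonoid M] (f : ι → ι → M) :
    offDiagSum (fun i j => f j i) = offDiagSum f := by
  rw [offDiagSum, Finset.sum_comm]
  simp only [offDiagSum, eq_comm]

lemma offDiagSum_mono [AddCommMonoid M] [PartialOrder M] [IsOrderedAddMonoid M]
    {f g : ι → ι → M} (h : ∀ i j, i ≠ j → f i j ≤ g i j) : offDiagSum f ≤ offDiagSum g :=
  Finset.sum_le_sum fun i _ => Finset.sum_le_sum fun j _ => by
    split_ifs with hij
    · exact le_rfl
    · exact h i j hij

lemma sum_ite_eq_zero_else [AddCommGroup M] (i : ι) (f : ι → M) :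
    ∑ j, (if i = j then 0 else f j) = ∑ j, f j - f i := by
  rw [Finset.sum_ite, Finset.sum_const_zero, zero_add, Finset.filter_ne,
    Finset.sum_erase_eq_sub (Finset.mem_univ i)]

end OffDiagonal

section Classical

variable {ι : Type*} [Fintype ι] [DecidableEq ι]

lemma sq_sum_sqrt_mul_le_mul_sum_min {κ : Type*} [Fintype κ] {a b : κ → ℝ} (ha : ∀ k, 0 ≤ a k)
    (hb : ∀ k, 0 ≤ b k) :
    (∑ k, √(a k * b k)) ^ 2 ≤ (∑ k, a k + ∑ k, b k) * ∑ k, min (a k) (b k) := by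
  calc (∑ k, √(a k * b k)) ^ 2 ≤ (∑ k, min (a k) (b k)) * ∑ k, max (a k) (b k) :=
        Finset.sum_sq_le_sum_mul_sum_of_sq_le_mul _ (fun k _ => le_min (ha k) (hb k))
          (fun k _ => (ha k).trans (le_max_left _ _))
          (fun k _ => by rw [Real.sq_sqrt (mul_nonneg (ha k) (hb k)), min_mul_max])
    _ ≤ (∑ k, min (a k) (b k)) * (∑ k, a k + ∑ k, b k) := by
        gcongr
        · exact Finset.sum_nonneg fun k _ => le_min (ha k) (hb k)
        · rw [← Finset.sum_add_distrib]
          exact Finset.sum_le_sum fun k _ => max_le_add_of_nonneg (ha k) (hb k)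
    _ = _ := mul_comm _ _

lemma add_mul_sum_min_le_of_ne {π : ι → ℝ} (hπ : ∀ i, 0 ≤ π i) (a : ι → ι → ℝ) {i j : ι}
    (hij : i ≠ j) :
    (π i + π j) * ∑ k, min (a i k) (a j k) ≤
      (π j * ∑ k, (if i = k then 0 else a i k) + π i * a i j) +
        (π i * ∑ k, (if j = k then 0 else a j k) + π j * a j i) := by
  have hk : ∀ k, (π i + π j) * min (a i k) (a j k) ≤
      π j * (if i = k then 0 else a i k) + (if k = j then π i * a i j else 0) +
        (π i * (if j = k then 0 else a j k) + (if k = i then π j * a j i else 0)) := by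
    intro k
    have hi := hπ i
    have hj := hπ j
    have h1 := min_le_left (a i k) (a j k)
    have h2 := min_le_right (a i k) (a j k)
    by_cases hki : k = i
    · subst hki
      simp only [if_pos, if_neg hij, if_neg hij.symm]
      nlinarith
    · by_cases hkj : k = j
      · subst hkj
        simp only [if_pos, if_neg hij, if_neg hki]
        nlinarith
      · simp only [if_neg hki, if_neg hkj, if_neg (Ne.symm hki), if_neg (Ne.symm hkj)]
        nlinarith
  calc (π i + π j) * ∑ k, min (a i k) (a j k) ≤ ∑ k, (π j * (if i = k then 0 else a i k) +
        (if k = j then π i * a i j else 0) +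
        (π i * (if j = k then 0 else a j k) + (if k = i then π j * a j i else 0))) := by
        rw [Finset.mul_sum]
        exact Finset.sum_le_sum fun k _ => hk k
    _ = _ := by
        simp only [Finset.sum_add_distrib, Finset.mul_sum, Finset.sum_ite_eq', Finset.mem_univ,
          if_true]

lemma offDiagSum_mul_rowSum_add_eq {π : ι → ℝ} (hπsum : ∑ i, π i = 1) (a : ι → ι → ℝ) :
    offDiagSum (fun i j => π j * ∑ k, (if i = k then 0 else a i k) + π i * a i j) =
      offDiagSum a := by
  refine Finset.sum_congr rfl fun i _ => ?_
  have hsplit : ∀ j, (if i = j then 0 else π j * ∑ k, (if i = k then 0 else a i k) + π i * a i j)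
      = (if i = j then 0 else π j) * ∑ k, (if i = k then 0 else a i k) +
        π i * (if i = j then 0 else a i j) := fun j => by
    split_ifs <;> simp
  rw [Finset.sum_congr rfl fun j _ => hsplit j, Finset.sum_add_distrib, ← Finset.sum_mul,
    ← Finset.mul_sum, sum_ite_eq_zero_else, hπsum]
  ring

theorem offDiagSum_mul_sq_sum_sqrt_mul_sqrt_le {π : ι → ℝ} (hπ : ∀ i, 0 ≤ π i)
    (hπsum : ∑ i, π i = 1) {q : ι → ι → ℝ} (hq : ∀ i k, 0 ≤ q i k) (hqsum : ∀ i, ∑ k, q i k = 1) :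
    offDiagSum (fun i j => π i * π j * (∑ k, √(q i k) * √(q j k)) ^ 2) ≤
      2 * offDiagSum (fun i j => π i * q i j) := by
  set a : ι → ι → ℝ := fun i k => π i * q i k
  set h : ι → ι → ℝ := fun i j => π j * ∑ k, (if i = k then 0 else a i k) + π i * a i j
  have ha : ∀ i k, 0 ≤ a i k := fun i k => mul_nonneg (hπ i) (hq i k)
  have hasum : ∀ i, ∑ k, a i k = π i := fun i => by rw [← Finset.mul_sum, hqsum, mul_one]
  have hpair : ∀ i j, i ≠ j → π i * π j * (∑ k, √(q i k) * √(q j k)) ^ 2 ≤ h i j + h j i := by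
    intro i j hij
    have hsqrt : ∀ k, √(a i k * a j k) = √(π i * π j) * (√(q i k) * √(q j k)) := fun k => by
      rw [show a i k * a j k = π i * π j * (q i k * q j k) by ring,
        Real.sqrt_mul (mul_nonneg (hπ i) (hπ j)), Real.sqrt_mul (hq i k)]
    calc π i * π j * (∑ k, √(q i k) * √(q j k)) ^ 2 = (∑ k, √(a i k * a j k)) ^ 2 := by
          rw [Finset.sum_congr rfl fun k _ => hsqrt k, ← Finset.mul_sum, mul_pow,
            Real.sq_sqrt (mul_nonneg (hπ i) (hπ j))]
      _ ≤ (π i + π j) * ∑ k, min (a i k) (a j k) := by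
          rw [← hasum i, ← hasum j]
          exact sq_sum_sqrt_mul_le_mul_sum_min (ha i) (ha j)
      _ ≤ h i j + h j i := add_mul_sum_min_le_of_ne hπ a hij
  calc offDiagSum (fun i j => π i * π j * (∑ k, √(q i k) * √(q j k)) ^ 2)
      ≤ offDiagSum (fun i j => h i j + h j i) := offDiagSum_mono hpair
    _ = 2 * offDiagSum a := by
        rw [offDiagSum_add, offDiagSum_swap h, offDiagSum_mul_rowSum_add_eq hπsum, two_mul]

end Classical

theorem montanaro_fidelity_lower_bound_general (N n : ℕ)
    (ρ : Fin N → Matrix (Fin n) (Fin n) ℂ)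
    (hρ : ∀ i, (ρ i).PosSemidef) (htr : ∀ i, (ρ i).trace = 1)
    (π : Fin N → ℝ) (hπ : ∀ i, 0 ≤ π i) (hπsum : ∑ i, π i = 1) :
    ∀ P : Fin N → Matrix (Fin n) (Fin n) ℂ,
      (∀ j, (P j).PosSemidef) → (∑ j, P j = 1) →
        (1 / 2) * (∑ i, ∑ j, if i = j then 0
            else π i * π j * mFid (ρ i) (ρ j) ^ 2) ≤
          ∑ i, ∑ j, if i = j then 0 else π i * ((P j * ρ i).trace).re := by
  intro P hP hPsum
  set q : Fin N → Fin N → ℝ := fun i k => (P k * ρ i).trace.re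
  have hq : ∀ i k, 0 ≤ q i k := fun i k => re_trace_mul_nonneg (hP k) (hρ i)
  have hqsum : ∀ i, ∑ k, q i k = 1 := fun i => by
    rw [← Complex.re_sum, ← trace_sum, ← Finset.sum_mul, hPsum, Matrix.one_mul, htr i,
      Complex.one_re]
  have hfid : offDiagSum (fun i j => π i * π j * mFid (ρ i) (ρ j) ^ 2) ≤
      offDiagSum (fun i j => π i * π j * (∑ k, √(q i k) * √(q j k)) ^ 2) :=
    offDiagSum_mono fun i j _ => mul_le_mul_of_nonneg_left
      (pow_le_pow_left₀ (mFid_nonneg _ _) (mFid_le_sum_sqrt_mul_sqrt (hρ i) (hρ j) P hP hPsum) 2)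
      (mul_nonneg (hπ i) (hπ j))
  have hclassical := offDiagSum_mul_sq_sum_sqrt_mul_sqrt_le hπ hπsum hq hqsum
  change 1 / 2 * offDiagSum _ ≤ offDiagSum _
  linarith

/-- Montanaro's lower bound: every POVM has misclassification probability at least
(1/2) Σ_{i≠j} π_i π_j F(ρ_i, ρ_j)². -/
theorem montanaro_fidelity_lower_bound (N n : ℕ) (hN : 1 ≤ N)
    (ρ : Fin N → Matrix (Fin n) (Fin n) ℂ)
    (hρ : ∀ i, (ρ i).PosSemidef) (htr : ∀ i, (ρ i).trace = 1)
    (π : Fin N → ℝ) (hπ : ∀ i, 0 ≤ π i) (hπsum : ∑ i, π i = 1) :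
    ∀ P : Fin N → Matrix (Fin n) (Fin n) ℂ,
      (∀ j, (P j).PosSemidef) → (∑ j, P j = 1) →
        (1 / 2) * (∑ i, ∑ j, if i = j then 0
            else π i * π j * mFid (ρ i) (ρ j) ^ 2) ≤
          ∑ i, ∑ j, if i = j then 0 else π i * ((P j * ρ i).trace).re :=
  montanaro_fidelity_lower_bound_general N n ρ hρ htr π hπ hπsum
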